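/- Let (M, φ, ξ, η, g) be an almost contact metric manifold. The associated almost Hermitian manifold (M × ℝ, J̄, ḡ) with ḡ = e^{-2t}(g + dt²) is quasi Kähler (i.e. (∇̄_U J̄)V + (∇̄_{J̄U} J̄)(J̄V) = 0 for all U, V) if and only if the following hold on M: (∇_X φ)Y + (∇_{φX} φ)(φY) = 2g(X,Y)ξ - 2η(Y)X + η(Y)∇_{φX}ξ, (∇_X η)(Y) + (∇_{φX} η)(φY) + 2g(φX,Y) = 0, ∇_ξ ξ = 0, and ∇_ξ φ = 0, for all vector fields X, Y on M. -/
import Mathlib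


/-- Abstract model of an almost contact manifold: `C` is the ring of smooth
functions, `V` the `C`-module of vector fields, with Lie bracket `bracket`,
the derivation action `act X f = X f`, and the almost contact structure
`(phi, xi, eta)`. -/
structure AlmostContactStr (C V : Type*) [CommRing C] [Algebra ℝ C]
    [AddCommGroup V] [Module C V] where
  bracket : V → V → V
  act : V → C → C
  phi : V →ₗ[C] V
  xi : V
  eta : V →ₗ[C] C
  bracket_antisymm : ∀ X Y, bracket X Y = - bracket Y X
  bracket_add_left : ∀ X Y Z, bracket (X + Y) Z = bracket X Z + bracket Y Z
  bracket_smul_right : ∀ (c : C) (X Y : V),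
    bracket X (c • Y) = c • bracket X Y + act X c • Y
  act_add_left : ∀ X Y c, act (X + Y) c = act X c + act Y c
  act_smul_left : ∀ (a : C) (X : V) (c : C), act (a • X) c = a * act X c
  act_add : ∀ X a b, act X (a + b) = act X a + act X b
  act_mul : ∀ X a b, act X (a * b) = act X a * b + a * act X b
  phi_phi : ∀ X, phi (phi X) = - X + eta X • xi
  phi_xi : phi xi = 0
  eta_phi : ∀ X, eta (phi X) = 0
  eta_xi : eta xi = 1

/-- An almost contact metric structure together with its Levi-Civita
connection `nabla` (torsion-free and metric). -/
structure ACMetricStr (C V : Type*) [CommRing C] [Algebra ℝ C]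
    [AddCommGroup V] [Module C V] extends AlmostContactStr C V where
  g : V →ₗ[C] V →ₗ[C] C
  g_symm : ∀ X Y, g X Y = g Y X
  g_phi : ∀ X Y, g (phi X) (phi Y) = g X Y - eta X * eta Y
  eta_eq : ∀ X, eta X = g xi X
  nabla : V → V → V
  nabla_add_left : ∀ X Y Z, nabla (X + Y) Z = nabla X Z + nabla Y Z
  nabla_smul_left : ∀ (c : C) (X Y : V), nabla (c • X) Y = c • nabla X Y
  nabla_add_right : ∀ X Y Z, nabla X (Y + Z) = nabla X Y + nabla X Z
  nabla_leibniz : ∀ (c : C) (X Y : V),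
    nabla X (c • Y) = c • nabla X Y + act X c • Y
  torsion_free : ∀ X Y, nabla X Y - nabla Y X = bracket X Y
  metric_compat : ∀ X Y Z, act X (g Y Z) = g (nabla X Y) Z + g Y (nabla X Z)

variable {C V : Type*} [CommRing C] [Algebra ℝ C]
  [AddCommGroup V] [Module C V] [Module ℝ V] [IsScalarTower ℝ C V]

namespace ACMetricStr

variable (A : ACMetricStr C V)

/-- `h = (1/2) L_ξ φ`, i.e. `hX = (1/2)([ξ, φX] - φ[ξ, X])`. -/
noncomputable def hT (X : V) : V :=
  (1/2 : ℝ) • (A.bracket A.xi (A.phi X) - A.phi (A.bracket A.xi X))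

/-- `(∇_X φ)Y`. -/
noncomputable def covPhi (X Y : V) : V := A.nabla X (A.phi Y) - A.phi (A.nabla X Y)

/-- `(∇_X η)(Y)`. -/
noncomputable def covEta (X Y : V) : C := A.act X (A.eta Y) - A.eta (A.nabla X Y)

/-- `dη(X,Y) = (1/2)(X(η Y) - Y(η X) - η [X,Y])`. -/
noncomputable def dEta (X Y : V) : C :=
  (1/2 : ℝ) • (A.act X (A.eta Y) - A.act Y (A.eta X) - A.eta (A.bracket X Y))

/-- `N⁽²⁾(X,Y) = (L_{φX} η)(Y) - (L_{φY} η)(X)`. -/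
noncomputable def N2 (X Y : V) : C :=
  (A.act (A.phi X) (A.eta Y) - A.eta (A.bracket (A.phi X) Y))
    - (A.act (A.phi Y) (A.eta X) - A.eta (A.bracket (A.phi Y) X))

/-- Condition `C₁`:
`(∇_X φ)Y + (∇_{φX} φ)(φY) = 2g(X,Y)ξ - η(Y)X - η(X)η(Y)ξ - η(Y)hX`. -/
noncomputable def C1 : Prop := ∀ X Y : V,
  A.covPhi X Y + A.covPhi (A.phi X) (A.phi Y)
    = ((2 : C) * A.g X Y) • A.xi - A.eta Y • X - (A.eta X * A.eta Y) • A.xi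
      - A.eta Y • A.hT X

/-- Condition `C₁'`:
`(∇_X φ)Y + (∇_{φX} φ)(φY) = 2g(X,Y)ξ - 2η(Y)X + η(Y)∇_{φX}ξ`. -/
noncomputable def C1' : Prop := ∀ X Y : V,
  A.covPhi X Y + A.covPhi (A.phi X) (A.phi Y)
    = ((2 : C) * A.g X Y) • A.xi - ((2 : C) * A.eta Y) • X
      + A.eta Y • A.nabla (A.phi X) A.xi

end ACMetricStr

namespace ACMetricStr

/-- The almost complex structure `J̄` on `M × ℝ`, acting on fields
`X + f ∂/∂t` represented as pairs `(X, f)`: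
`J̄X = φX - η(X)∂/∂t`, `J̄(∂/∂t) = ξ`. -/
noncomputable def Jbar (A : ACMetricStr C V) (U : V × C) : V × C :=
  (A.phi U.1 + U.2 • A.xi, - A.eta U.1)

/-- The metric `ḡ = e^{-2t}(g + dt²)` on `M × ℝ`, as a function of `t`. -/
noncomputable def Gbar (A : ACMetricStr C V) (U W : V × C) : ℝ → C :=
  fun t => Real.exp (-2 * t) • (A.g U.1 W.1 + U.2 * W.2)

/-- The Levi-Civita connection `∇̄` of `ḡ` on fields `X + f ∂/∂t`,
given by `∇̄_X Y = ∇_X Y + g(X,Y)∂/∂t`, `∇̄_X ∂/∂t = -X`,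
`∇̄_{∂/∂t} X = -X`, `∇̄_{∂/∂t} ∂/∂t = -∂/∂t`. -/
noncomputable def nbBar (A : ACMetricStr C V) (U W : V × C) : V × C :=
  (A.nabla U.1 W.1 - W.2 • U.1 - U.2 • W.1,
    A.g U.1 W.1 + A.act U.1 W.2 - U.2 * W.2)

end ACMetricStr

set_option linter.unusedSectionVars false

namespace ACMetricStr

variable (A : ACMetricStr C V)

lemma act_zero' (X : V) : A.act X 0 = 0 := by
  have h := A.act_add X 0 0
  simp only [add_zero] at h
  exact (add_eq_left.mp h.symm)

lemma act_one' (X : V) : A.act X 1 = 0 := by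
  have h := A.act_mul X 1 1
  simp only [mul_one, one_mul] at h
  exact (add_eq_left.mp h.symm)

lemma act_neg' (X : V) (a : C) : A.act X (-a) = - A.act X a := by
  have h := A.act_add X a (-a)
  rw [add_neg_cancel, A.act_zero'] at h
  exact (neg_eq_of_add_eq_zero_right h.symm).symm

lemma nabla_zero_right' (X : V) : A.nabla X 0 = 0 := by
  have h := A.nabla_leibniz 0 X 0
  simpa [A.act_zero'] using h

lemma nabla_zero_left' (Y : V) : A.nabla 0 Y = 0 := by
  have h := A.nabla_smul_left 0 0 Y
  simpa using h

lemma nabla_neg_right' (X Y : V) : A.nabla X (-Y) = - A.nabla X Y := by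
  have h := A.nabla_leibniz (-1) X Y
  simpa [A.act_neg', A.act_one'] using h

lemma g_xi_left' (X : V) : A.g A.xi X = A.eta X := (A.eta_eq X).symm

lemma g_xi_right' (X : V) : A.g X A.xi = A.eta X := by
  rw [A.g_symm, A.g_xi_left']

lemma two_cancel (x : C) (h : x + x = 0) : x = 0 := by
  have h2 : (2 : ℝ) • x = 0 := by rw [two_smul]; exact h
  calc x = (1/2 : ℝ) • ((2 : ℝ) • x) := by rw [smul_smul]; norm_num
  _ = 0 := by rw [h2, smul_zero]

lemma eta_nabla_xi' (X : V) : A.eta (A.nabla X A.xi) = 0 := by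
  have h := A.metric_compat X A.xi A.xi
  rw [A.g_xi_left', A.eta_xi, A.act_one', A.g_xi_left',
    ← A.g_symm, A.g_xi_left'] at h
  exact two_cancel _ h.symm

lemma g_phi_right' (X Y : V) : A.g X (A.phi Y) = - A.g (A.phi X) Y := by
  have h := A.g_phi X (A.phi Y)
  rw [A.eta_phi, mul_zero, sub_zero, A.phi_phi] at h
  rw [← h]
  simp [A.g_xi_right', A.eta_phi]

set_option maxHeartbeats 1600000 in
lemma expand (X Y : V) (f k : C) :
    (A.nbBar (X, f) (A.Jbar (Y, k)) - A.Jbar (A.nbBar (X, f) (Y, k)))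
      + (A.nbBar (A.Jbar (X, f)) (A.Jbar (A.Jbar (Y, k)))
        - A.Jbar (A.nbBar (A.Jbar (X, f)) (A.Jbar (Y, k))))
    = (A.covPhi X Y + A.covPhi (A.phi X) (A.phi Y)
        + ((2 : C) * A.eta Y) • X - ((2 : C) * A.g X Y) • A.xi
        - A.eta Y • A.nabla (A.phi X) A.xi
        + k • (A.nabla X A.xi + ((2 : C)) • A.phi X
            - A.phi (A.nabla (A.phi X) A.xi))
        + f • (A.covPhi A.xi (A.phi Y) - A.eta Y • A.nabla A.xi A.xi)
        - (f * k) • A.phi (A.nabla A.xi A.xi),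
      -(A.covEta X Y + A.covEta (A.phi X) (A.phi Y) + (2 : C) * A.g (A.phi X) Y)
        - f * A.covEta A.xi (A.phi Y)) := by
  unfold nbBar Jbar covPhi covEta
  simp only [Prod.mk_add_mk, Prod.mk_sub_mk, Prod.mk.injEq]
  constructor
  · simp [A.nabla_add_right, A.nabla_add_left, A.nabla_smul_left, A.nabla_leibniz,
      A.nabla_zero_right', A.nabla_zero_left', A.nabla_neg_right',
      A.phi_phi, A.phi_xi, A.eta_phi, A.eta_xi,
      A.act_add, A.act_add_left, A.act_smul_left, A.act_neg', A.act_zero', A.act_one',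
      A.g_xi_left', A.g_xi_right', A.g_phi_right', A.eta_nabla_xi',
      smul_eq_mul]
    module
  · simp [A.nabla_add_right, A.nabla_add_left, A.nabla_smul_left, A.nabla_leibniz,
      A.nabla_zero_right', A.nabla_zero_left', A.nabla_neg_right',
      A.phi_phi, A.phi_xi, A.eta_phi, A.eta_xi,
      A.act_add, A.act_add_left, A.act_smul_left, A.act_neg', A.act_zero', A.act_one',
      A.g_xi_left', A.g_xi_right', A.g_phi_right', A.eta_nabla_xi',
      smul_eq_mul, A.act_mul]
    ring

end ACMetricStr


/-- `(M × ℝ, J̄, ḡ)` is quasi Kähler, i.e.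
`(∇̄_U J̄)V + (∇̄_{J̄U} J̄)(J̄V) = 0` for all `U, V`, iff the four conditions
(2.28), (2.29), (2.33), (2.36) hold on `M`. -/
theorem quasi_kaehler_iff (A : ACMetricStr C V) :
    (∀ U W : V × C,
        (A.nbBar U (A.Jbar W) - A.Jbar (A.nbBar U W))
          + (A.nbBar (A.Jbar U) (A.Jbar (A.Jbar W))
            - A.Jbar (A.nbBar (A.Jbar U) (A.Jbar W))) = 0) ↔
      ((∀ X Y : V,
          A.covPhi X Y + A.covPhi (A.phi X) (A.phi Y)
            = ((2 : C) * A.g X Y) • A.xi - ((2 : C) * A.eta Y) • X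
              + A.eta Y • A.nabla (A.phi X) A.xi) ∧
        (∀ X Y : V,
          A.covEta X Y + A.covEta (A.phi X) (A.phi Y)
            + (2 : C) * A.g (A.phi X) Y = 0) ∧
        A.nabla A.xi A.xi = 0 ∧
        (∀ Y : V, A.covPhi A.xi Y = 0)) := by
  constructor
  · intro h
    have hS : ∀ (X Y : V) (f k : C),
        (A.covPhi X Y + A.covPhi (A.phi X) (A.phi Y)
            + ((2 : C) * A.eta Y) • X - ((2 : C) * A.g X Y) • A.xi
            - A.eta Y • A.nabla (A.phi X) A.xi
            + k • (A.nabla X A.xi + ((2 : C)) • A.phi X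
                - A.phi (A.nabla (A.phi X) A.xi))
            + f • (A.covPhi A.xi (A.phi Y) - A.eta Y • A.nabla A.xi A.xi)
            - (f * k) • A.phi (A.nabla A.xi A.xi) = 0)
          ∧ (-(A.covEta X Y + A.covEta (A.phi X) (A.phi Y)
              + (2 : C) * A.g (A.phi X) Y)
            - f * A.covEta A.xi (A.phi Y) = 0) := by
      intro X Y f k
      have h0 := h (X, f) (Y, k)
      rw [A.expand] at h0
      exact Prod.mk_eq_zero.mp h0
    have hc3 : A.nabla A.xi A.xi = 0 := by
      have h1 := (hS 0 A.xi 1 0).1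
      simp [ACMetricStr.covPhi, A.nabla_zero_left', A.nabla_zero_right',
        A.eta_xi, A.phi_xi] at h1
      exact h1
    have hc4' : ∀ Y : V, A.covPhi A.xi (A.phi Y) = 0 := by
      intro Y
      have h1 := (hS 0 Y 1 0).1
      simp [ACMetricStr.covPhi, A.nabla_zero_left', A.nabla_zero_right',
        hc3] at h1
      exact h1
    have hc4 : ∀ Y : V, A.covPhi A.xi Y = 0 := by
      intro Y
      have h5 := hc4' (A.phi Y)
      simp [ACMetricStr.covPhi, A.phi_phi, A.nabla_add_right, A.nabla_leibniz,
        A.nabla_neg_right', A.phi_xi, hc3, A.nabla_zero_right'] at h5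
      simp only [ACMetricStr.covPhi]
      linear_combination (norm := module) -h5
    refine ⟨fun X Y => ?_, fun X Y => ?_, hc3, hc4⟩
    · have h1 := (hS X Y 0 0).1
      simp only [zero_smul, smul_zero, zero_mul, mul_zero, add_zero,
        sub_zero, zero_add] at h1
      linear_combination (norm := module) h1
    · have h2 := (hS X Y 0 0).2
      simp only [zero_mul, sub_zero] at h2
      linear_combination -h2
  · rintro ⟨hc1, hc2, hc3, hc4⟩ U W
    obtain ⟨X, f⟩ := U
    obtain ⟨Y, k⟩ := W
    rw [A.expand, Prod.mk_eq_zero]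
    have hk : A.nabla X A.xi + (2 : C) • A.phi X
        - A.phi (A.nabla (A.phi X) A.xi) = 0 := by
      have h1 := hc1 X A.xi
      simp [ACMetricStr.covPhi, A.phi_xi, A.nabla_zero_right', A.eta_xi,
        A.g_xi_right'] at h1
      have h2 := congrArg A.phi h1
      simp [A.phi_phi, A.phi_xi, A.eta_nabla_xi', A.eta_phi] at h2
      linear_combination (norm := module) h2
    have hce : A.covEta A.xi (A.phi Y) = 0 := by
      have hn : A.nabla A.xi (A.phi Y)
          = A.covPhi A.xi Y + A.phi (A.nabla A.xi Y) := by
        unfold ACMetricStr.covPhi; abel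
      simp [ACMetricStr.covEta, A.eta_phi, A.act_zero', hn, hc4]
    constructor
    · simp only [hc3, smul_zero, map_zero, sub_zero, hc4]
      linear_combination (norm := module) hc1 X Y + k • hk
    · linear_combination (-1 : C) * hc2 X Y - f * hce
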